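/- Let G be a locally compact Hausdorff group, A a unital C*-algebra, and α = ({D_t}_{t∈G}, {α_t}_{t∈G}) a partial action of G on A. Then there exists an open subgroup H of G such that D_t = A for every t ∈ H (so α restricted to H is a global action). In particular, if G is connected, then D_t = A for every t ∈ G, i.e. every partial action of a connected group on a unital C*-algebra is a global action. -/

import Mathlib

/-! An ideal of a unital Banach algebra that comes within distance `1` of the unit contains
an invertible element, hence is everything. Since the set of `t` for which `D_t` meets the
open unit ball around `1` is open, the elements `t` with `D_t = D_{t⁻¹} = A` contain a
neighbourhood of the identity; they form a subgroup, which is therefore open, hence also closed,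
hence everything when `G` is connected. -/

/-- A partial action of a topological group `G` on a unital C*-algebra `A`: a family of
closed two-sided ideals `dom t` together with maps `act t` restricting to
*-isomorphisms `dom t⁻¹ → dom t`, such that `dom 1 = A`, `act 1 = id`, `act (s * t)`
extends `act s ∘ act t`, the family of ideals is continuous, and `(t, x) ↦ act t x` is
continuous. -/
structure CStarPartialAction (G A : Type*) [Group G] [TopologicalSpace G]
    [NormedRing A] [StarRing A] [NormedAlgebra ℂ A] where
  dom : G → Set A
  act : G → A → A
  isClosed_dom : ∀ t, IsClosed (dom t)
  zero_mem : ∀ t, (0 : A) ∈ dom t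
  add_mem : ∀ t, ∀ x ∈ dom t, ∀ y ∈ dom t, x + y ∈ dom t
  smul_mem : ∀ t (c : ℂ), ∀ x ∈ dom t, c • x ∈ dom t
  mul_mem_left : ∀ t (a : A), ∀ x ∈ dom t, a * x ∈ dom t
  mul_mem_right : ∀ t (a : A), ∀ x ∈ dom t, x * a ∈ dom t
  bijOn : ∀ t, Set.BijOn (act t) (dom t⁻¹) (dom t)
  act_add : ∀ t, ∀ x ∈ dom t⁻¹, ∀ y ∈ dom t⁻¹, act t (x + y) = act t x + act t y
  act_smul : ∀ t (c : ℂ), ∀ x ∈ dom t⁻¹, act t (c • x) = c • act t x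
  act_mul : ∀ t, ∀ x ∈ dom t⁻¹, ∀ y ∈ dom t⁻¹, act t (x * y) = act t x * act t y
  act_star : ∀ t, ∀ x ∈ dom t⁻¹, act t (star x) = star (act t x)
  dom_one : dom 1 = Set.univ
  act_one : ∀ x, act 1 x = x
  act_comp : ∀ s t x, x ∈ dom t⁻¹ → act t x ∈ dom s⁻¹ →
    x ∈ dom (s * t)⁻¹ ∧ act (s * t) x = act s (act t x)
  isOpen_hit : ∀ U : Set A, IsOpen U → IsOpen {t : G | (U ∩ dom t).Nonempty}
  continuousOn : ContinuousOn (fun p : G × A => act p.1 p.2) {p : G × A | p.2 ∈ dom p.1⁻¹}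


open Set Metric

theorem Set.eq_univ_of_isUnit_mem {R : Type*} [Monoid R] {S : Set R}
    (hS : ∀ a, ∀ x ∈ S, a * x ∈ S) {x : R} (hx : x ∈ S) (hu : IsUnit x) : S = univ := by
  obtain ⟨u, rfl⟩ := hu
  exact eq_univ_of_forall fun a => by simpa using hS (a * ↑u⁻¹) u hx

theorem isUnit_of_mem_ball_one {R : Type*} [NormedRing R] [HasSummableGeomSeries R] {x : R}
    (hx : x ∈ ball (1 : R) 1) : IsUnit x := by
  rw [mem_ball', dist_eq_norm] at hx
  simpa using isUnit_one_sub_of_norm_lt_one hx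

namespace CStarPartialAction

variable {G A : Type*} [Group G] [TopologicalSpace G] [NormedRing A] [StarRing A]
  [NormedAlgebra ℂ A] (α : CStarPartialAction G A)

theorem dom_eq_univ_of_inter_ball_one_nonempty [CompleteSpace A] {t : G}
    (h : (ball (1 : A) 1 ∩ α.dom t).Nonempty) : α.dom t = univ :=
  let ⟨_, hball, hdom⟩ := h
  Set.eq_univ_of_isUnit_mem (α.mul_mem_left t) hdom (isUnit_of_mem_ball_one hball)

theorem dom_mul_inv_eq_univ {s t : G} (hs : α.dom s⁻¹ = univ) (ht : α.dom t⁻¹ = univ) :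
    α.dom (s * t)⁻¹ = univ :=
  eq_univ_of_forall fun x => (α.act_comp s t x (ht ▸ mem_univ x) (hs ▸ mem_univ _)).1

def globalSubgroup : Subgroup G where
  carrier := {t | α.dom t = univ ∧ α.dom t⁻¹ = univ}
  one_mem' := by simp [α.dom_one]
  inv_mem' := fun ⟨h, h'⟩ => ⟨h', by rwa [inv_inv]⟩
  mul_mem' := by
    rintro s t ⟨hs, hs'⟩ ⟨ht, ht'⟩
    refine ⟨?_, α.dom_mul_inv_eq_univ hs' ht'⟩
    simpa using α.dom_mul_inv_eq_univ (s := t⁻¹) (t := s⁻¹) (by rwa [inv_inv]) (by rwa [inv_inv])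

theorem dom_eq_univ_of_mem_globalSubgroup {t : G} (ht : t ∈ α.globalSubgroup) :
    α.dom t = univ :=
  ht.1

theorem isOpen_globalSubgroup [IsTopologicalGroup G] [CompleteSpace A] :
    IsOpen (α.globalSubgroup : Set G) := by
  set V : Set G := {t | (ball (1 : A) 1 ∩ α.dom t).Nonempty}
  have hV : IsOpen V := α.isOpen_hit _ isOpen_ball
  have hone : (1 : G) ∈ V := ⟨1, mem_ball_self one_pos, α.dom_one ▸ mem_univ 1⟩
  have hsub : V ∩ Inv.inv ⁻¹' V ⊆ α.globalSubgroup := fun t ⟨ht, ht'⟩ =>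
    ⟨α.dom_eq_univ_of_inter_ball_one_nonempty ht, α.dom_eq_univ_of_inter_ball_one_nonempty ht'⟩
  have hnhds : V ∩ Inv.inv ⁻¹' V ∈ nhds (1 : G) :=
    (hV.inter (hV.preimage continuous_inv)).mem_nhds ⟨hone, by simpa using hone⟩
  exact Subgroup.isOpen_of_mem_nhds _ (Filter.mem_of_superset hnhds hsub)

theorem globalSubgroup_eq_top [IsTopologicalGroup G] [ConnectedSpace G] [CompleteSpace A] :
    α.globalSubgroup = ⊤ := by
  have hopen := α.isOpen_globalSubgroup
  rw [← SetLike.coe_set_eq, Subgroup.coe_top]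
  exact IsClopen.eq_univ ⟨Subgroup.isClosed_of_isOpen _ hopen, hopen⟩ ⟨1, one_mem _⟩

end CStarPartialAction

theorem CStarPartialAction.global_of_unital_general {G A : Type*} [Group G] [TopologicalSpace G]
    [IsTopologicalGroup G]
    [NormedRing A] [StarRing A] [NormedAlgebra ℂ A]
    [CompleteSpace A]
    (α : CStarPartialAction G A) :
    (∃ H : Subgroup G, IsOpen (H : Set G) ∧ ∀ t ∈ H, α.dom t = Set.univ) ∧
    (ConnectedSpace G → ∀ t : G, α.dom t = Set.univ) :=
  ⟨⟨α.globalSubgroup, α.isOpen_globalSubgroup, fun _ => α.dom_eq_univ_of_mem_globalSubgroup⟩,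
    fun _ t => α.dom_eq_univ_of_mem_globalSubgroup (α.globalSubgroup_eq_top ▸ Subgroup.mem_top t)⟩

/-- If `α` is a partial action of a locally compact Hausdorff group `G` on a unital
C*-algebra `A`, there is an open subgroup `H ≤ G` with `D_t = A` for all `t ∈ H`, so
that `α` restricted to `H` is a global action; in particular, any partial action of a
connected group on a unital C*-algebra is a global action. -/
theorem CStarPartialAction.global_of_unital {G A : Type*} [Group G] [TopologicalSpace G]
    [IsTopologicalGroup G] [LocallyCompactSpace G] [T2Space G]
    [NormedRing A] [StarRing A] [CStarRing A] [NormedAlgebra ℂ A] [StarModule ℂ A]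
    [CompleteSpace A]
    (α : CStarPartialAction G A) :
    (∃ H : Subgroup G, IsOpen (H : Set G) ∧ ∀ t ∈ H, α.dom t = Set.univ) ∧
    (ConnectedSpace G → ∀ t : G, α.dom t = Set.univ) :=
  CStarPartialAction.global_of_unital_general α
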